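/- Let E be a real Banach space of Rademacher type p ∈ [1,2], q ∈ [p,∞), k, M ∈ ℕ, and x_1,…,x_M, y_1,…,y_M ∈ E. Then for a Rademacher family (r_j)_{j=1}^M, ‖Σ_{j=1}^M r_j (⊗^k x_j − ⊗^k y_j)‖_{L_q(Ω̃; ⊗^{k,s}_{ε_s} E)} ≤ 16 k √π K_{q,p} τ_p(E) K_{q,2} · Σ_{i=1}^k binom(k,i) (Σ_{j=1}^M ‖x_j − y_j‖_E^{ip} ‖y_j‖_E^{(k−i)p})^{1/p}. -/

import Mathlib

open MeasureTheory ProbabilityTheory BigOperators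
open scoped TensorProduct

variable {E : Type u} [NormedAddCommGroup E] [NormedSpace ℝ E]

noncomputable def tpair {k : ℕ} (f : Fin k → (E →L[ℝ] ℝ)) :
    (⨂[ℝ] _ : Fin k, E) →ₗ[ℝ] ℝ :=
  PiTensorProduct.lift
    ((MultilinearMap.mkPiAlgebra ℝ (Fin k) ℝ).compLinearMap fun i => (f i).toLinearMap)

noncomputable def symInjNorm {k : ℕ} (U : ⨂[ℝ] _ : Fin k, E) : ℝ :=
  sSup {r | ∃ f : E →L[ℝ] ℝ, ‖f‖ ≤ 1 ∧ r = |tpair (fun _ => f) U|}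

noncomputable def radLq (q : ℝ) {F : Type*} [SeminormedAddCommGroup F] {n : ℕ}
    (x : Fin n → F) : ℝ :=
  ((∑ ε : Fin n → Bool, ‖∑ j, (if ε j then x j else -x j)‖ ^ q) / 2 ^ n) ^ (1/q)

/-!
Pairing with `f^{⊗k}` for `f` in the unit ball `B` of `E'` turns the symmetric injective norm
into a sup norm, so the Rademacher sums can be read in `ℓ^∞(B)`, where `K_{q,p}` applies. The
binomial formula `f(x)^k - f(y)^k = ∑_{i=1}^k C(k,i) f(x - y)^i f(y)^(k-i)` and the triangle
inequality leave the monomials `f ↦ f(a_j)^i f(b_j)^(k-i)`. With `c_j = ‖a_j‖^i ‖b_j‖^(k-i)`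
these are `k c_j`-Lipschitz functions of `(f(a_j/‖a_j‖), f(b_j/‖b_j‖))` vanishing at `0`, so a
contraction principle for Rademacher processes compares them with the linear process
`f ↦ f(∑_j ±2k c_j a_j/‖a_j‖ + ∑_j ±'2k c_j b_j/‖b_j‖)`, which type `p` controls.

The contraction principle is proved for the hinges `(sup - c)⁺` by induction on the number of
signs, one sign being a finite case analysis, and passes to `p`-th powers through
`(x⁺)^p = ∫₀^∞ (x - c)⁺ p(p-1) c^(p-2) dc`. This gives the constant `8k K_{q,p} τ_p(E)`, which
suffices since `16 √π K_{q,2} ≥ 8`.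
-/

open scoped ENNReal lp

section SignedSum

variable {A : Type*} [AddCommGroup A] {n : ℕ}

def signed (b : Bool) (a : A) : A :=
  if b then a else -a

def signedSum (ε : Fin n → Bool) (x : Fin n → A) : A :=
  ∑ j, signed (ε j) (x j)

@[simp] lemma signed_true (a : A) : signed true a = a := rfl

@[simp] lemma signed_false (a : A) : signed false a = -a := rfl

lemma map_signed {B G : Type*} [AddCommGroup B] [FunLike G A B] [AddMonoidHomClass G A B]
    (g : G) (b : Bool) (a : A) : g (signed b a) = signed b (g a) := by
  cases b <;> simp

lemma abs_signed (b : Bool) (a : ℝ) : |signed b a| = |a| := by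
  cases b <;> simp

lemma map_signedSum {B G : Type*} [AddCommGroup B] [FunLike G A B] [AddMonoidHomClass G A B]
    (g : G) (ε : Fin n → Bool) (x : Fin n → A) :
    g (signedSum ε x) = signedSum ε fun j => g (x j) := by
  simp only [signedSum, map_sum, map_signed]

lemma signedSum_add (ε : Fin n → Bool) (x y : Fin n → A) :
    signedSum ε (fun j => x j + y j) = signedSum ε x + signedSum ε y := by
  simp only [signedSum, ← Finset.sum_add_distrib]
  exact Finset.sum_congr rfl fun j _ => by cases ε j <;> simp [add_comm]

lemma signedSum_smul {R : Type*} [Ring R] [Module R A] (ε : Fin n → Bool) (c : R)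
    (x : Fin n → A) : signedSum ε (fun j => c • x j) = c • signedSum ε x := by
  simp only [signedSum, Finset.smul_sum]
  exact Finset.sum_congr rfl fun j _ => by cases ε j <;> simp

lemma signedSum_not (ε : Fin n → Bool) (x : Fin n → A) :
    signedSum (fun j => !ε j) x = -signedSum ε x := by
  simp only [signedSum, ← Finset.sum_neg_distrib]
  exact Finset.sum_congr rfl fun j _ => by cases ε j <;> simp

lemma signedSum_zero (ε : Fin n → Bool) : signedSum ε (fun _ => (0 : A)) = 0 := by
  simp only [signedSum]
  exact Finset.sum_eq_zero fun j _ => by cases ε j <;> simp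

lemma signedSum_cons (b : Bool) (ε : Fin n → Bool) (x : Fin (n + 1) → A) :
    signedSum (Fin.cons b ε) x = signed b (x 0) + signedSum ε fun j => x j.succ := by
  simp [signedSum, Fin.sum_univ_succ]

lemma signedSum_append {m : ℕ} (ε : Fin n → Bool) (ε' : Fin m → Bool) (x : Fin n → A)
    (y : Fin m → A) :
    signedSum (Fin.append ε ε') (Fin.append x y) = signedSum ε x + signedSum ε' y := by
  simp [signedSum, Fin.sum_univ_add]

lemma abs_signedSum_le {C : ℝ} (ε : Fin n → Bool) {x : Fin n → ℝ} (hx : ∀ j, |x j| ≤ C) :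
    |signedSum ε x| ≤ n * C :=
  (Finset.abs_sum_le_sum_abs _ _).trans <| by
    simpa [abs_signed] using Finset.sum_le_sum fun j (_ : j ∈ Finset.univ) => hx j

end SignedSum

lemma Fintype.sum_fin_succ_fun {β M : Type*} [Fintype β] [AddCommMonoid M] {n : ℕ}
    (G : (Fin (n + 1) → β) → M) :
    ∑ ε, G ε = ∑ b, ∑ ε : Fin n → β, G (Fin.cons b ε) := by
  rw [← Fintype.sum_prod_type']
  exact (Fintype.sum_equiv (Fin.consEquiv fun _ => β) _ _ fun _ => rfl).symm

lemma Fintype.sum_fin_append_fun {β M : Type*} [Fintype β] [AddCommMonoid M] {n m : ℕ}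
    (G : (Fin (n + m) → β) → M) :
    ∑ ε, G ε = ∑ ε : Fin n → β, ∑ ε' : Fin m → β, G (Fin.append ε ε') := by
  rw [← Fintype.sum_prod_type']
  exact (Fintype.sum_equiv (Fin.appendEquiv n m) _ _ fun _ => rfl).symm

section PowerMean

lemma two_rpow_one_div_le {p : ℝ} (hp : 1 ≤ p) : (2 : ℝ) ^ (1 / p) ≤ 2 :=
  (Real.rpow_le_rpow_of_exponent_le one_le_two ((div_le_one (by linarith)).2 hp)).trans_eq
    (Real.rpow_one 2)

variable {ι : Type*} [Fintype ι] {ρ D : ℝ} {f g : ι → ℝ}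

lemma rpow_mean_mono (hρ : 0 ≤ ρ) (hD : 0 ≤ D) (hf : ∀ i, 0 ≤ f i) (hfg : ∀ i, f i ≤ g i) :
    ((∑ i, f i ^ ρ) / D) ^ (1 / ρ) ≤ ((∑ i, g i ^ ρ) / D) ^ (1 / ρ) := by
  gcongr with i
  · exact div_nonneg (Finset.sum_nonneg fun i _ => Real.rpow_nonneg (hf i) ρ) hD
  · exact hf i
  · exact hfg i

lemma rpow_mean_add_le (hρ : 1 ≤ ρ) (hD : 0 ≤ D) (hf : ∀ i, 0 ≤ f i) (hg : ∀ i, 0 ≤ g i) :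
    ((∑ i, (f i + g i) ^ ρ) / D) ^ (1 / ρ)
      ≤ ((∑ i, f i ^ ρ) / D) ^ (1 / ρ) + ((∑ i, g i ^ ρ) / D) ^ (1 / ρ) := by
  have hsum : ∀ h : ι → ℝ, (∀ i, 0 ≤ h i) → 0 ≤ ∑ i, h i ^ ρ := fun h hh =>
    Finset.sum_nonneg fun i _ => Real.rpow_nonneg (hh i) ρ
  rw [Real.div_rpow (hsum _ fun i => add_nonneg (hf i) (hg i)) hD,
    Real.div_rpow (hsum f hf) hD, Real.div_rpow (hsum g hg) hD, ← add_div]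
  gcongr
  exact Real.Lp_add_le_of_nonneg _ hρ (fun i _ => hf i) fun i _ => hg i

lemma rpow_sum_const_mul_rpow {t : ℝ} (ht : 0 ≤ t) (hρ : ρ ≠ 0) (hf : ∀ i, 0 ≤ f i) :
    (∑ i, (t * f i) ^ ρ) ^ (1 / ρ) = t * (∑ i, f i ^ ρ) ^ (1 / ρ) := by
  simp only [Real.mul_rpow ht (hf _), ← Finset.mul_sum]
  rw [Real.mul_rpow (by positivity) (Finset.sum_nonneg fun i _ => Real.rpow_nonneg (hf i) ρ),
    ← Real.rpow_mul ht, mul_one_div_cancel hρ, Real.rpow_one]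

end PowerMean

lemma pow_mul_pow_rpow {x y : ℝ} (hx : 0 ≤ x) (hy : 0 ≤ y) (i m : ℕ) (p : ℝ) :
    (x ^ i * y ^ m) ^ p = x ^ ((i : ℝ) * p) * y ^ ((m : ℝ) * p) := by
  rw [Real.mul_rpow (by positivity) (by positivity), Real.rpow_mul hx, Real.rpow_mul hy,
    Real.rpow_natCast, Real.rpow_natCast]

section RadLq

variable {F : Type*} [SeminormedAddCommGroup F] {n : ℕ} {ρ : ℝ}

lemma radLq_def (x : Fin n → F) :
    radLq ρ x = ((∑ ε, ‖signedSum ε x‖ ^ ρ) / 2 ^ n) ^ (1 / ρ) := rfl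

lemma radLq_nonneg (x : Fin n → F) : 0 ≤ radLq ρ x := by
  rw [radLq_def]; positivity

lemma radLq_add_le (hρ : 1 ≤ ρ) (x y : Fin n → F) :
    radLq ρ (fun j => x j + y j) ≤ radLq ρ x + radLq ρ y := by
  simp only [radLq_def, signedSum_add]
  exact (rpow_mean_mono (by linarith) (by positivity) (fun _ => norm_nonneg _)
    fun ε => norm_add_le _ _).trans
    (rpow_mean_add_le hρ (by positivity) (fun _ => norm_nonneg _) fun _ => norm_nonneg _)

lemma radLq_zero (hρ : ρ ≠ 0) : radLq ρ (fun _ : Fin n => (0 : F)) = 0 := by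
  simp [radLq_def, signedSum_zero, Real.zero_rpow hρ, hρ]

lemma radLq_sum_le (hρ : 1 ≤ ρ) {ι : Type*} (s : Finset ι) (x : ι → Fin n → F) :
    radLq ρ (fun j => ∑ i ∈ s, x i j) ≤ ∑ i ∈ s, radLq ρ (x i) := by
  classical
  induction s using Finset.induction_on with
  | empty => simp [radLq_zero (show ρ ≠ 0 by linarith)]
  | insert a s ha ih =>
    simp only [Finset.sum_insert ha]
    exact (radLq_add_le hρ _ _).trans (by gcongr)

lemma radLq_smul {G : Type*} [SeminormedAddCommGroup G] [NormedSpace ℝ G] (hρ : ρ ≠ 0)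
    (c : ℝ) (x : Fin n → G) : radLq ρ (fun j => c • x j) = |c| * radLq ρ x := by
  simp only [radLq_def, signedSum_smul, norm_smul, Real.norm_eq_abs,
    Real.mul_rpow (abs_nonneg c) (norm_nonneg _), ← Finset.mul_sum, mul_div_assoc]
  rw [Real.mul_rpow (by positivity) (by positivity), ← Real.rpow_mul (abs_nonneg c),
    mul_one_div_cancel hρ, Real.rpow_one]

lemma radLq_single (hρ : ρ ≠ 0) (v : F) : radLq ρ (fun _ : Fin 1 => v) = ‖v‖ := by
  have hnorm : ∀ ε : Fin 1 → Bool, ‖signedSum ε fun _ => v‖ = ‖v‖ := fun ε => by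
    by_cases h : ε 0 <;> simp [signedSum, h]
  simp only [radLq_def, hnorm, Finset.sum_const, Finset.card_univ, Fintype.card_fun,
    Fintype.card_bool, Fintype.card_fin, nsmul_eq_mul]
  rw [Nat.cast_pow, Nat.cast_ofNat, mul_div_cancel_left₀ _ (by positivity),
    ← Real.rpow_mul (norm_nonneg v), mul_one_div_cancel hρ, Real.rpow_one]

lemma rpow_sum_norm_append_le (hρ : 1 ≤ ρ) {x y : Fin n → F} {d : Fin n → ℝ}
    (hx : ∀ j, ‖x j‖ ≤ d j) (hy : ∀ j, ‖y j‖ ≤ d j) :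
    (∑ l, ‖Fin.append x y l‖ ^ ρ) ^ (1 / ρ) ≤ 2 * (∑ j, d j ^ ρ) ^ (1 / ρ) := by
  have hd : ∀ j, 0 ≤ d j := fun j => (norm_nonneg _).trans (hx j)
  have hle : ∀ z : Fin n → F, (∀ j, ‖z j‖ ≤ d j) → ∑ j, ‖z j‖ ^ ρ ≤ ∑ j, d j ^ ρ := fun z hz =>
    Finset.sum_le_sum fun j _ => Real.rpow_le_rpow (norm_nonneg _) (hz j) (by linarith)
  calc _ ≤ (2 * ∑ j, d j ^ ρ) ^ (1 / ρ) := by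
        rw [Fin.sum_univ_add]
        simp only [Fin.append_left, Fin.append_right]
        exact Real.rpow_le_rpow (by positivity) (by linarith [hle x hx, hle y hy]) (by positivity)
    _ = 2 ^ (1 / ρ) * (∑ j, d j ^ ρ) ^ (1 / ρ) :=
        Real.mul_rpow zero_le_two (Finset.sum_nonneg fun j _ => Real.rpow_nonneg (hd j) ρ)
    _ ≤ 2 * (∑ j, d j ^ ρ) ^ (1 / ρ) := by
        gcongr
        · exact Real.rpow_nonneg (Finset.sum_nonneg fun j _ => Real.rpow_nonneg (hd j) ρ) _
        exact two_rpow_one_div_le hρ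

end RadLq

lemma one_le_of_radLq_le_mul {F : Type*} [SeminormedAddCommGroup F] {v : F} (hv : 0 < ‖v‖)
    {p q K : ℝ} (hp : p ≠ 0) (hq : q ≠ 0)
    (hK : radLq q (fun _ : Fin 1 => v) ≤ K * radLq p fun _ : Fin 1 => v) : 1 ≤ K := by
  rw [radLq_single hq, radLq_single hp] at hK
  exact (le_mul_iff_one_le_left hv).1 hK

lemma one_le_of_type_const {G : Type*} [NormedAddCommGroup G] [Nontrivial G] {p τ : ℝ}
    (hp : p ≠ 0) (hτ : ∀ (n : ℕ) (x : Fin n → G), radLq p x ≤ τ * (∑ j, ‖x j‖ ^ p) ^ (1 / p)) :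
    1 ≤ τ := by
  obtain ⟨v, hv⟩ := exists_ne (0 : G)
  refine one_le_of_radLq_le_mul (norm_pos_iff.2 hv) hp hp ?_
  simpa [← Real.rpow_mul (norm_nonneg v), mul_inv_cancel₀ hp, radLq_single hp] using hτ 1 fun _ => v

section Rademacher

variable {Ω : Type*} [MeasurableSpace Ω] {μ : Measure Ω} [IsProbabilityMeasure μ] {M : ℕ}
  {r : Fin M → Ω → ℝ}

lemma measurable_decide_eq_one : Measurable fun t : ℝ => decide (t = 1) :=
  measurable_to_countable' fun b => by
    cases b
    · convert (measurableSet_singleton (1 : ℝ)).compl using 1; ext; simp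
    · convert measurableSet_singleton (1 : ℝ) using 1; ext; simp

lemma measure_preimage_decide_eq_one (hr_meas : ∀ j, Measurable (r j))
    (hr_half : ∀ j, μ {ω | r j ω = 1} = 1 / 2) (j : Fin M) (b : Bool) :
    μ ((fun ω => decide (r j ω = 1)) ⁻¹' {b}) = 1 / 2 := by
  cases b
  · have hpre : (fun ω => decide (r j ω = 1)) ⁻¹' {false} = {ω | r j ω = 1}ᶜ := by ext; simp
    rw [hpre, prob_compl_eq_one_sub (measurableSet_eq_fun (hr_meas j) measurable_const),
      hr_half, one_div, ENNReal.one_sub_inv_two]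
  · simpa [Set.preimage] using hr_half j

lemma integral_comp_rademacher (hr_meas : ∀ j, Measurable (r j))
    (hr_half : ∀ j, μ {ω | r j ω = 1} = 1 / 2) (hr_indep : iIndepFun r μ)
    (G : (Fin M → Bool) → ℝ) :
    ∫ ω, G (fun j => decide (r j ω = 1)) ∂μ = (∑ ε, G ε) / 2 ^ M := by
  set R : Ω → Fin M → Bool := fun ω j => decide (r j ω = 1)
  have hR : Measurable R :=
    measurable_pi_lambda _ fun j => measurable_decide_eq_one.comp (hr_meas j)
  have hsigns : iIndepFun (fun j ω => decide (r j ω = 1)) μ :=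
    hr_indep.comp (fun _ t => decide (t = 1)) fun _ => measurable_decide_eq_one
  have hatom : ∀ ε, (μ.map R).real {ε} = (2 ^ M)⁻¹ := by
    intro ε
    have hpre : R ⁻¹' {ε} = ⋂ j ∈ Finset.univ, (fun ω => decide (r j ω = 1)) ⁻¹' {ε j} := by
      ext ω; simp [R, funext_iff]
    rw [measureReal_def, Measure.map_apply hR (measurableSet_singleton ε), hpre,
      hsigns.measure_inter_preimage_eq_mul _ fun j _ => measurableSet_singleton _]
    simp [measure_preimage_decide_eq_one hr_meas hr_half, ENNReal.toReal_inv]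
  rw [← integral_map hR.aemeasurable (Integrable.of_finite).aestronglyMeasurable,
    integral_fintype Integrable.of_finite]
  simp only [hatom, smul_eq_mul, ← Finset.mul_sum]
  ring

end Rademacher

section Comparison

variable {T : Type*}

-- The bounds are written with `+ -x` so that they match `signed false x` definitionally.
lemma two_mul_le_of_le_abs_add_abs {a c f s u T₁ T₂ T₃ T₄ : ℝ} (hf : f ≤ |s| + |u|)
    (h₁ : a + 2 * s + 2 * u - c ≤ T₁) (h₂ : a + 2 * s + -(2 * u) - c ≤ T₂)
    (h₃ : a + -(2 * s) + 2 * u - c ≤ T₃) (h₄ : a + -(2 * s) + -(2 * u) - c ≤ T₄)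
    (h₁₀ : 0 ≤ T₁) (h₂₀ : 0 ≤ T₂) (h₃₀ : 0 ≤ T₃) (h₄₀ : 0 ≤ T₄) :
    2 * (a + f - c) ≤ T₁ + T₂ + T₃ + T₄ := by
  rcases abs_cases s with ⟨hs, _⟩ | ⟨hs, _⟩ <;> rcases abs_cases u with ⟨hu, _⟩ | ⟨hu, _⟩ <;>
    rcases le_total (a - c) 0 with ha | ha <;> linarith

lemma two_mul_add_le_of_sub_le {a a' c f g s u s' u' T₁ T₂ T₃ T₄ : ℝ}
    (hfg : f - g ≤ |s - s'| + |u - u'|)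
    (h₁ : a + 2 * s + 2 * u - c ≤ T₁) (h₂ : a + 2 * s + -(2 * u) - c ≤ T₂)
    (h₃ : a + -(2 * s) + 2 * u - c ≤ T₃) (h₄ : a + -(2 * s) + -(2 * u) - c ≤ T₄)
    (h₁' : a' + 2 * s' + 2 * u' - c ≤ T₁) (h₂' : a' + 2 * s' + -(2 * u') - c ≤ T₂)
    (h₃' : a' + -(2 * s') + 2 * u' - c ≤ T₃) (h₄' : a' + -(2 * s') + -(2 * u') - c ≤ T₄) :
    2 * ((a + f - c) + (a' - g - c)) ≤ T₁ + T₂ + T₃ + T₄ := by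
  rcases abs_cases (s - s') with ⟨hs, _⟩ | ⟨hs, _⟩ <;>
    rcases abs_cases (u - u') with ⟨hu, _⟩ | ⟨hu, _⟩ <;> linarith

lemma max_add_max_le_of_lipschitz {a a' c f g s u s' u' T₁ T₂ T₃ T₄ : ℝ}
    (hf : f ≤ |s| + |u|) (hg : -g ≤ |s'| + |u'|) (hfg : f - g ≤ |s - s'| + |u - u'|)
    (h₁ : a + 2 * s + 2 * u - c ≤ T₁) (h₂ : a + 2 * s + -(2 * u) - c ≤ T₂)
    (h₃ : a + -(2 * s) + 2 * u - c ≤ T₃) (h₄ : a + -(2 * s) + -(2 * u) - c ≤ T₄)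
    (h₁' : a' + 2 * s' + 2 * u' - c ≤ T₁) (h₂' : a' + 2 * s' + -(2 * u') - c ≤ T₂)
    (h₃' : a' + -(2 * s') + 2 * u' - c ≤ T₃) (h₄' : a' + -(2 * s') + -(2 * u') - c ≤ T₄)
    (h₁₀ : 0 ≤ T₁) (h₂₀ : 0 ≤ T₂) (h₃₀ : 0 ≤ T₃) (h₄₀ : 0 ≤ T₄) :
    max (a + f - c) 0 + max (a' - g - c) 0 ≤ (T₁ + T₂ + T₃ + T₄) / 2 := by
  have hone := two_mul_le_of_le_abs_add_abs hf h₁ h₂ h₃ h₄ h₁₀ h₂₀ h₃₀ h₄₀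
  have hone' := two_mul_le_of_le_abs_add_abs hg h₁' h₂' h₃' h₄' h₁₀ h₂₀ h₃₀ h₄₀
  have htwo := two_mul_add_le_of_sub_le hfg h₁ h₂ h₃ h₄ h₁' h₂' h₃' h₄'
  rcases le_total (a + f - c) 0 with hx | hx <;> rcases le_total (a' - g - c) 0 with hy | hy <;>
    simp only [max_eq_right, max_eq_left, hx, hy] <;> linarith

lemma BddAbove.range_add_of_abs_le {A g : T → ℝ} {C : ℝ} (hA : BddAbove (Set.range A))
    (hg : ∀ t, |g t| ≤ C) : BddAbove (Set.range fun t => A t + g t) := by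
  obtain ⟨a, ha⟩ := hA
  refine ⟨a + C, ?_⟩
  rintro _ ⟨t, rfl⟩
  linarith [ha ⟨t, rfl⟩, (abs_le.1 (hg t)).2]

lemma max_ciSup_sub_eq_ciSup [Nonempty T] {g : T → ℝ} (hg : BddAbove (Set.range g)) (c : ℝ) :
    max ((⨆ t, g t) - c) 0 = ⨆ t, max (g t - c) 0 :=
  Monotone.map_ciSup_of_continuousAt (by fun_prop)
    (fun _ _ h => max_le_max (sub_le_sub_right h c) le_rfl) hg

noncomputable def supHinge (c : ℝ) (g : T → ℝ) : ℝ :=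
  max ((⨆ t, g t) - c) 0

lemma sub_le_supHinge {g : T → ℝ} (hg : BddAbove (Set.range g)) (c : ℝ) (t : T) :
    g t - c ≤ supHinge c g :=
  (sub_le_sub_right (le_ciSup hg t) c).trans (le_max_left _ _)

lemma supHinge_nonneg (c : ℝ) (g : T → ℝ) : 0 ≤ supHinge c g :=
  le_max_right _ _

lemma two_mul_sum_supHinge_le [Nonempty T] {A φ s u : T → ℝ} {C : ℝ}
    (hA : BddAbove (Set.range A)) (hs : ∀ t, |s t| ≤ C) (hu : ∀ t, |u t| ≤ C)
    (hφ : ∀ t, |φ t| ≤ |s t| + |u t|)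
    (hφ' : ∀ t t', |φ t - φ t'| ≤ |s t - s t'| + |u t - u t'|) (c : ℝ) :
    2 * ∑ b, supHinge c (fun t => A t + signed b (φ t))
      ≤ ∑ b, ∑ b', supHinge c (fun t => A t + signed b (2 * s t) + signed b' (2 * u t)) := by
  have hbdd : ∀ b b',
      BddAbove (Set.range fun t => A t + signed b (2 * s t) + signed b' (2 * u t)) :=
    fun b b' => (hA.range_add_of_abs_le (C := 2 * C) fun t => by
        rw [abs_signed, abs_mul, abs_two]; linarith [hs t]).range_add_of_abs_le
      (C := 2 * C) fun t => by rw [abs_signed, abs_mul, abs_two]; linarith [hu t]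
  have hφbdd : ∀ b, BddAbove (Set.range fun t => A t + signed b (φ t)) := fun b =>
    hA.range_add_of_abs_le (C := C + C) fun t => by
      rw [abs_signed]; linarith [hφ t, hs t, hu t]
  set H := fun b b' => supHinge c fun t => A t + signed b (2 * s t) + signed b' (2 * u t)
  have hH : ∀ b b' t, A t + signed b (2 * s t) + signed b' (2 * u t) - c ≤ H b b' :=
    fun b b' t => sub_le_supHinge (hbdd b b') c t
  have hpair := ciSup_add_ciSup_le fun t t' => max_add_max_le_of_lipschitz
    ((le_abs_self _).trans (hφ t)) ((neg_le_abs _).trans (hφ t'))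
    ((le_abs_self _).trans (hφ' t t')) (hH true true t) (hH true false t) (hH false true t)
    (hH false false t) (hH true true t') (hH true false t') (hH false true t')
    (hH false false t') (supHinge_nonneg _ _) (supHinge_nonneg _ _)
    (supHinge_nonneg _ _) (supHinge_nonneg _ _)
  rw [Fintype.sum_bool, Fintype.sum_bool, Fintype.sum_bool, Fintype.sum_bool, supHinge, supHinge,
    max_ciSup_sub_eq_ciSup (hφbdd true), max_ciSup_sub_eq_ciSup (hφbdd false)]
  calc _ = 2 * ((⨆ t, max (A t + φ t - c) 0) + ⨆ t', max (A t' - φ t' - c) 0) := rfl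
    _ ≤ 2 * ((H true true + H true false + H false true + H false false) / 2) := by gcongr
    _ = _ := by ring

theorem two_pow_mul_sum_supHinge_le [Nonempty T] {n : ℕ} {A : T → ℝ} {φ s u : Fin n → T → ℝ}
    {C : ℝ} (hA : BddAbove (Set.range A)) (hs : ∀ j t, |s j t| ≤ C) (hu : ∀ j t, |u j t| ≤ C)
    (hφ : ∀ j t, |φ j t| ≤ |s j t| + |u j t|)
    (hφ' : ∀ j t t', |φ j t - φ j t'| ≤ |s j t - s j t'| + |u j t - u j t'|) (c : ℝ) :
    2 ^ n * ∑ ε, supHinge c (fun t => A t + signedSum ε (φ · t))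
      ≤ ∑ ε, ∑ ε', supHinge c
          (fun t => A t + signedSum ε (2 * s · t) + signedSum ε' (2 * u · t)) := by
  -- Peel off the first sign: the induction hypothesis runs with `A ± φ 0` as background, and
  -- `two_mul_sum_supHinge_le` then trades `± φ 0` for `± 2 s 0 ± 2 u 0`.
  induction n generalizing A with
  | zero => simp [signedSum]
  | succ n ih =>
    have h2s : ∀ j t, |2 * s j t| ≤ 2 * C := fun j t => by
      rw [abs_mul, abs_two]; linarith [hs j t]
    have h2u : ∀ j t, |2 * u j t| ≤ 2 * C := fun j t => by
      rw [abs_mul, abs_two]; linarith [hu j t]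
    calc 2 ^ (n + 1) * ∑ ε, supHinge c (fun t => A t + signedSum ε (φ · t))
        = ∑ b, 2 * (2 ^ n * ∑ ε : Fin n → Bool, supHinge c
            (fun t => A t + signed b (φ 0 t) + signedSum ε (φ ·.succ t))) := by
          simp only [Fintype.sum_fin_succ_fun, signedSum_cons, Finset.mul_sum, add_assoc]
          ring_nf
      _ ≤ ∑ b, 2 * ∑ ε : Fin n → Bool, ∑ ε' : Fin n → Bool, supHinge c (fun t => A t
            + signed b (φ 0 t) + signedSum ε (2 * s ·.succ t) + signedSum ε' (2 * u ·.succ t)) := by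
          gcongr with b
          refine ih (hA.range_add_of_abs_le (C := C + C) fun t => ?_) (fun j => hs j.succ)
            (fun j => hu j.succ) (fun j => hφ j.succ) fun j => hφ' j.succ
          rw [abs_signed]; linarith [hφ 0 t, hs 0 t, hu 0 t]
      _ = ∑ ε : Fin n → Bool, ∑ ε' : Fin n → Bool, 2 * ∑ b, supHinge c (fun t => A t
            + signedSum ε (2 * s ·.succ t) + signedSum ε' (2 * u ·.succ t) + signed b (φ 0 t)) := by
          simp only [Finset.mul_sum]
          refine Finset.sum_comm.trans <| Finset.sum_congr rfl fun ε _ =>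
            Finset.sum_comm.trans <| Finset.sum_congr rfl fun ε' _ =>
              Finset.sum_congr rfl fun b _ => ?_
          congr 2; funext t; ring
      _ ≤ ∑ ε : Fin n → Bool, ∑ ε' : Fin n → Bool, ∑ b, ∑ b', supHinge c (fun t => A t
            + signedSum ε (2 * s ·.succ t) + signedSum ε' (2 * u ·.succ t)
            + signed b (2 * s 0 t) + signed b' (2 * u 0 t)) := by
          gcongr with ε _ ε'
          have hB := (hA.range_add_of_abs_le fun t => abs_signedSum_le ε fun j => h2s j.succ t)
            |>.range_add_of_abs_le fun t => abs_signedSum_le ε' fun j => h2u j.succ t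
          exact two_mul_sum_supHinge_le hB (hs 0) (hu 0) (hφ 0) (hφ' 0) c
      _ = _ := by
          refine (Finset.sum_congr rfl fun ε _ => Finset.sum_comm).trans <|
            (Finset.sum_congr rfl fun ε _ => Finset.sum_congr rfl fun b _ =>
              Finset.sum_comm).trans <| Finset.sum_comm.trans ?_
          simp only [Fintype.sum_fin_succ_fun (n := n), signedSum_cons]
          refine Finset.sum_congr rfl fun b _ => Finset.sum_congr rfl fun ε _ =>
            Finset.sum_congr rfl fun b' _ => Finset.sum_congr rfl fun ε' _ => ?_
          congr 1; funext t; ring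

end Comparison

section HingeToPower

open intervalIntegral

variable {p : ℝ}

lemma integrableOn_hinge_mul_rpow (x : ℝ) (hp : 1 < p) :
    IntegrableOn (fun c => max (x - c) 0 * (p * (p - 1) * c ^ (p - 2))) (Set.Ioi 0) := by
  have hm : 0 < max x 1 := lt_max_of_lt_right one_pos
  refine IntegrableOn.of_forall_sdiff_eq_zero (s := Set.Ioc 0 (max x 1)) ?_ measurableSet_Ioi
    fun c hc => ?_
  · have hk : IntegrableOn (fun c : ℝ => p * (p - 1) * c ^ (p - 2)) (Set.Ioc 0 (max x 1)) :=
      (intervalIntegrable_iff_integrableOn_Ioc_of_le hm.le).mp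
        ((intervalIntegrable_rpow' (by linarith)).const_mul _)
    refine hk.bdd_mul (c := max x 0) (by fun_prop) <|
      (ae_restrict_iff' measurableSet_Ioc).2 <| ae_of_all _ fun c hc => ?_
    rw [Real.norm_of_nonneg (le_max_right _ _)]
    exact max_le_max (by linarith [hc.1]) le_rfl
  · have : max x 1 < c := lt_of_not_ge fun h => hc.2 ⟨hc.1, h⟩
    simp [show x - c ≤ 0 by linarith [le_max_left x 1]]

lemma integral_hinge_mul_rpow (x : ℝ) (hp : 1 < p) :
    ∫ c in Set.Ioi 0, max (x - c) 0 * (p * (p - 1) * c ^ (p - 2)) = max x 0 ^ p := by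
  rcases le_or_gt x 0 with hx | hx
  · rw [max_eq_right hx, Real.zero_rpow (by linarith)]
    refine setIntegral_eq_zero_of_forall_eq_zero fun c hc => ?_
    simp [show x - c ≤ 0 by linarith [hc.out]]
  rw [setIntegral_eq_of_subset_of_forall_sdiff_eq_zero measurableSet_Ioi Set.Ioc_subset_Ioi_self
      fun c hc => by simp [show x - c ≤ 0 by linarith [not_and.1 hc.2 hc.1.out]],
    ← intervalIntegral.integral_of_le hx.le, max_eq_left hx.le]
  have hpoint : ∀ c ∈ Set.uIcc 0 x, max (x - c) 0 * (p * (p - 1) * c ^ (p - 2))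
      = p * (p - 1) * (x * c ^ (p - 2)) - p * (p - 1) * c ^ (p - 1) := by
    intro c hc
    rw [Set.uIcc_of_le hx.le] at hc
    rw [max_eq_left (by linarith [hc.2])]
    rcases hc.1.eq_or_lt with rfl | hc0
    · rw [Real.zero_rpow (show p - 1 ≠ 0 by linarith)]; ring
    · rw [show p - 1 = p - 2 + 1 by ring, Real.rpow_add_one hc0.ne']; ring
  rw [intervalIntegral.integral_congr hpoint, intervalIntegral.integral_sub
      (((intervalIntegrable_rpow' (by linarith)).const_mul x).const_mul _)
      ((intervalIntegrable_rpow' (by linarith)).const_mul _),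
    intervalIntegral.integral_const_mul, intervalIntegral.integral_const_mul,
    intervalIntegral.integral_const_mul, integral_rpow (Or.inl (by linarith)),
    integral_rpow (Or.inl (by linarith)), show p - 2 + 1 = p - 1 by ring,
    show p - 1 + 1 = p by ring, Real.zero_rpow (by linarith), Real.zero_rpow (by linarith)]
  have hxp : x * x ^ (p - 1) = x ^ p := by
    rw [mul_comm, ← Real.rpow_add_one hx.ne', sub_add_cancel]
  rw [sub_zero, sub_zero, ← mul_div_assoc, hxp]
  field_simp [show p - 1 ≠ 0 by linarith]
  ring

lemma mul_sum_max_rpow_le {ι κ : Type*} [Fintype ι] [Fintype κ] {X : ι → ℝ} {Y : κ → ℝ}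
    {a : ℝ} (hp : 1 ≤ p)
    (h : ∀ c, 0 ≤ c → a * ∑ i, max (X i - c) 0 ≤ ∑ j, max (Y j - c) 0) :
    a * ∑ i, max (X i) 0 ^ p ≤ ∑ j, max (Y j) 0 ^ p := by
  rcases hp.eq_or_lt with rfl | hp
  · simpa using h 0 le_rfl
  -- Every `max x 0 ^ p` is a mixture of the hinges `max (x - c) 0`, `c > 0`.
  simp only [← integral_hinge_mul_rpow _ hp, ← integral_finsetSum _
    fun i _ => integrableOn_hinge_mul_rpow _ hp, ← MeasureTheory.integral_const_mul]
  refine setIntegral_mono_on ((integrable_finsetSum _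
    fun i _ => integrableOn_hinge_mul_rpow _ hp).const_mul a)
    (integrable_finsetSum _ fun j _ => integrableOn_hinge_mul_rpow _ hp) measurableSet_Ioi
    fun c hc => ?_
  rw [← Finset.sum_mul, ← Finset.sum_mul, ← mul_assoc]
  exact mul_le_mul_of_nonneg_right (h c (le_of_lt hc))
    (mul_nonneg (by nlinarith) (Real.rpow_nonneg (le_of_lt hc) _))

end HingeToPower

section MomentComparison

variable {T : Type*} [Nonempty T] {n : ℕ} {p C : ℝ}

theorem two_pow_mul_sum_max_iSup_rpow_le {φ s u : Fin n → T → ℝ} (hp : 1 ≤ p)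
    (hs : ∀ j t, |s j t| ≤ C) (hu : ∀ j t, |u j t| ≤ C)
    (hφ : ∀ j t, |φ j t| ≤ |s j t| + |u j t|)
    (hφ' : ∀ j t t', |φ j t - φ j t'| ≤ |s j t - s j t'| + |u j t - u j t'|) :
    2 ^ n * ∑ ε, max (⨆ t, signedSum ε (φ · t)) 0 ^ p
      ≤ ∑ ε, ∑ ε', max (⨆ t, signedSum ε (2 * s · t) + signedSum ε' (2 * u · t)) 0 ^ p := by
  simp only [← Fintype.sum_prod_type']
  refine mul_sum_max_rpow_le hp fun c _ => ?_
  rw [Fintype.sum_prod_type]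
  simpa [supHinge] using
    two_pow_mul_sum_supHinge_le (A := 0) (by simp) hs hu hφ hφ' c

lemma sum_iSup_abs_rpow_le {φ : Fin n → T → ℝ} (hp : 0 ≤ p) (hφ : ∀ j t, |φ j t| ≤ C) :
    ∑ ε, (⨆ t, |signedSum ε (φ · t)|) ^ p
      ≤ 2 * ∑ ε, max (⨆ t, signedSum ε (φ · t)) 0 ^ p := by
  have hbdd : ∀ ε, BddAbove (Set.range fun t => signedSum ε (φ · t)) := fun ε =>
    ⟨n * C, by rintro _ ⟨t, rfl⟩; exact (le_abs_self _).trans (abs_signedSum_le ε (hφ · t))⟩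
  have hpoint : ∀ ε, (⨆ t, |signedSum ε (φ · t)|) ^ p
      ≤ max (⨆ t, signedSum ε (φ · t)) 0 ^ p
        + max (⨆ t, signedSum (fun j => !ε j) (φ · t)) 0 ^ p := by
    intro ε
    set a := max (⨆ t, signedSum ε (φ · t)) 0
    set b := max (⨆ t, signedSum (fun j => !ε j) (φ · t)) 0
    have hsup : (⨆ t, |signedSum ε (φ · t)|) ≤ max a b := ciSup_le fun t => abs_le'.2
      ⟨(le_ciSup (hbdd ε) t).trans ((le_max_left _ _).trans (le_max_left _ _)),
        (signedSum_not ε (φ · t) ▸ le_ciSup (hbdd _) t).trans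
          ((le_max_left _ _).trans (le_max_right _ _))⟩
    have ha : 0 ≤ a := le_max_right _ _
    have hb : 0 ≤ b := le_max_right _ _
    refine (Real.rpow_le_rpow (Real.iSup_nonneg fun _ => abs_nonneg _) hsup hp).trans ?_
    rcases le_total a b with h | h
    · rw [max_eq_right h]; linarith [Real.rpow_nonneg ha p]
    · rw [max_eq_left h]; linarith [Real.rpow_nonneg hb p]
  have hnot : ∑ ε : Fin n → Bool, max (⨆ t, signedSum (fun j => !ε j) (φ · t)) 0 ^ p
      = ∑ ε, max (⨆ t, signedSum ε (φ · t)) 0 ^ p :=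
    Fintype.sum_equiv (Equiv.piCongrRight fun _ => Equiv.boolNot) _ _ fun _ => rfl
  calc _ ≤ ∑ ε, (max (⨆ t, signedSum ε (φ · t)) 0 ^ p
          + max (⨆ t, signedSum (fun j => !ε j) (φ · t)) 0 ^ p) :=
        Finset.sum_le_sum fun ε _ => hpoint ε
    _ = _ := by rw [Finset.sum_add_distrib, hnot]; ring

end MomentComparison

lemma abs_pow_sub_pow_le_of_abs_le_one {x y : ℝ} (hx : |x| ≤ 1) (hy : |y| ≤ 1) (n : ℕ) :
    |x ^ n - y ^ n| ≤ n * |x - y| :=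
  (abs_pow_sub_pow_le ..).trans <| by
    calc |x - y| * n * max |x| |y| ^ (n - 1) ≤ |x - y| * n * 1 := by
          gcongr; exact pow_le_one₀ (le_max_of_le_left (abs_nonneg x)) (max_le hx hy)
      _ = n * |x - y| := by ring

lemma abs_pow_mul_pow_sub_le {x y x' y' : ℝ} (hx : |x| ≤ 1) (hy : |y| ≤ 1) (hx' : |x'| ≤ 1)
    (hy' : |y'| ≤ 1) (i m : ℕ) :
    |x ^ i * y ^ m - x' ^ i * y' ^ m| ≤ i * |x - x'| + m * |y - y'| := by
  have hym : |y ^ m| ≤ 1 := by rw [abs_pow]; exact pow_le_one₀ (abs_nonneg y) hy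
  have hxi : |x' ^ i| ≤ 1 := by rw [abs_pow]; exact pow_le_one₀ (abs_nonneg x') hx'
  calc |x ^ i * y ^ m - x' ^ i * y' ^ m|
      = |(x ^ i - x' ^ i) * y ^ m + x' ^ i * (y ^ m - y' ^ m)| := by ring_nf
    _ ≤ |x ^ i - x' ^ i| * 1 + 1 * |y ^ m - y' ^ m| := by
      refine (abs_add_le _ _).trans ?_
      rw [abs_mul, abs_mul]
      gcongr
    _ ≤ i * |x - x'| + m * |y - y'| := by
      rw [mul_one, one_mul]
      exact add_le_add (abs_pow_sub_pow_le_of_abs_le_one hx hx' i)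
        (abs_pow_sub_pow_le_of_abs_le_one hy hy' m)

section DualBall

variable (E) in
abbrev DualBall : Type u := Metric.closedBall (0 : E →L[ℝ] ℝ) 1

instance : Nonempty (DualBall E) := ⟨⟨0, Metric.mem_closedBall_self zero_le_one⟩⟩

lemma DualBall.abs_apply_le (f : DualBall E) (v : E) : |f.1 v| ≤ ‖v‖ :=
  (f.1.le_opNorm v).trans <| mul_le_of_le_one_left (norm_nonneg v) (mem_closedBall_zero_iff.1 f.2)

lemma DualBall.abs_apply_div_norm_le_one (f : DualBall E) (v : E) : |f.1 v / ‖v‖| ≤ 1 := by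
  rw [abs_div, abs_norm]
  exact div_le_one_of_le₀ (f.abs_apply_le v) (norm_nonneg v)

lemma DualBall.apply_eq_norm_mul (f : DualBall E) (v : E) : f.1 v = ‖v‖ * (f.1 v / ‖v‖) := by
  rcases eq_or_ne v 0 with rfl | hv
  · simp
  · rw [mul_div_cancel₀ _ (norm_ne_zero_iff.2 hv)]

lemma lp.norm_eq_ciSup_abs {ι : Type*} (g : ℓ^∞(ι, ℝ)) : ‖g‖ = ⨆ i, |g i| :=
  lp.norm_eq_ciSup g

lemma lp.signedSum_apply {ι : Type*} {n : ℕ} (ε : Fin n → Bool) (g : Fin n → ℓ^∞(ι, ℝ)) (i : ι) :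
    signedSum ε g i = signedSum ε fun j => g j i :=
  map_signedSum ((Pi.evalAddMonoidHom (fun _ => ℝ) i).comp (lp.coeFnAddMonoidHom _ ∞)) ε g

noncomputable def dualMonomial (i m : ℕ) (a b : E) : ℓ^∞(DualBall E, ℝ) :=
  ⟨fun f => f.1 a ^ i * f.1 b ^ m, memℓp_infty ⟨‖a‖ ^ i * ‖b‖ ^ m, by
    rintro _ ⟨f, rfl⟩
    simp only [Real.norm_eq_abs, abs_mul, abs_pow]
    gcongr <;> exact f.abs_apply_le _⟩⟩

@[simp] lemma dualMonomial_apply (i m : ℕ) (a b : E) (f : DualBall E) :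
    dualMonomial i m a b f = f.1 a ^ i * f.1 b ^ m := rfl

lemma dualMonomial_zero_left {i : ℕ} (hi : i ≠ 0) (m : ℕ) (b : E) : dualMonomial i m 0 b = 0 :=
  lp.ext <| funext fun f => by simp [hi]

lemma tpair_tprod {k : ℕ} (f : E →L[ℝ] ℝ) (v : E) :
    tpair (fun _ => f) (⨂ₜ[ℝ] _ : Fin k, v) = f v ^ k := by
  simp [tpair, PiTensorProduct.lift.tprod]

lemma symInjNorm_eq_norm {k : ℕ} {W : ⨂[ℝ] _ : Fin k, E} {g : ℓ^∞(DualBall E, ℝ)}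
    (h : ∀ f : DualBall E, tpair (fun _ => f.1) W = g f) : symInjNorm W = ‖g‖ := by
  rw [lp.norm_eq_ciSup_abs, symInjNorm, iSup]
  congr 1
  ext r
  constructor
  · rintro ⟨f, hf, rfl⟩
    exact ⟨⟨f, mem_closedBall_zero_iff.2 hf⟩, by simp [← h]⟩
  · rintro ⟨f, rfl⟩
    exact ⟨f.1, mem_closedBall_zero_iff.1 f.2, by simp [h]⟩

end DualBall

section Contraction

lemma max_iSup_signedSum_add_rpow_le {p : ℝ} (hp : 0 ≤ p) {M : ℕ} (v w : Fin M → E)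
    (ε ε' : Fin M → Bool) :
    max (⨆ f : DualBall E, (signedSum ε fun j => 2 * f.1 (v j))
      + signedSum ε' fun j => 2 * f.1 (w j)) 0 ^ p
      ≤ ‖signedSum (Fin.append ε ε') (Fin.append (fun j => (2 : ℝ) • v j)
          fun j => (2 : ℝ) • w j)‖ ^ p := by
  refine Real.rpow_le_rpow (le_max_right _ _) (max_le (ciSup_le fun f => ?_) (norm_nonneg _)) hp
  have hf : f.1 (signedSum (Fin.append ε ε') (Fin.append (fun j => (2 : ℝ) • v j)
      fun j => (2 : ℝ) • w j))
      = (signedSum ε fun j => 2 * f.1 (v j)) + signedSum ε' fun j => 2 * f.1 (w j) := by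
    simp [signedSum_append, map_signedSum]
  exact hf ▸ (le_abs_self _).trans (f.abs_apply_le _)

theorem radLq_le_two_mul_radLq_append {p : ℝ} (hp : 1 ≤ p) {M : ℕ}
    {Ψ : Fin M → ℓ^∞(DualBall E, ℝ)} {v w : Fin M → E}
    (hΨ : ∀ j f, |Ψ j f| ≤ |f.1 (v j)| + |f.1 (w j)|)
    (hΨ' : ∀ j f f', |Ψ j f - Ψ j f'| ≤ |f.1 (v j) - f'.1 (v j)| + |f.1 (w j) - f'.1 (w j)|) :
    radLq p Ψ ≤ 2 * radLq p (Fin.append (fun j => (2 : ℝ) • v j) fun j => (2 : ℝ) • w j) := by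
  set C := ∑ l, (‖v l‖ + ‖w l‖)
  have hv : ∀ j (f : DualBall E), |f.1 (v j)| ≤ C := fun j f => (f.abs_apply_le _).trans <|
    (le_add_of_nonneg_right (norm_nonneg _)).trans <|
      Finset.single_le_sum (f := fun l => ‖v l‖ + ‖w l‖) (fun _ _ => by positivity)
        (Finset.mem_univ j)
  have hw : ∀ j (f : DualBall E), |f.1 (w j)| ≤ C := fun j f => (f.abs_apply_le _).trans <|
    (le_add_of_nonneg_left (norm_nonneg _)).trans <|
      Finset.single_le_sum (f := fun l => ‖v l‖ + ‖w l‖) (fun _ _ => by positivity)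
        (Finset.mem_univ j)
  have habs := sum_iSup_abs_rpow_le (zero_le_one.trans hp) fun j f =>
    (hΨ j f).trans (add_le_add (hv j f) (hw j f))
  have hcomp := two_pow_mul_sum_max_iSup_rpow_le hp hv hw hΨ hΨ'
  set u := Fin.append (fun j => (2 : ℝ) • v j) fun j => (2 : ℝ) • w j
  have htarget := max_iSup_signedSum_add_rpow_le (zero_le_one.trans hp) v w
  have hsum : (∑ ε, ‖signedSum ε Ψ‖ ^ p) / 2 ^ M
      ≤ 2 * ((∑ η, ‖signedSum η u‖ ^ p) / 2 ^ (M + M)) := by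
    have h3 := Finset.sum_le_sum fun ε (_ : ε ∈ Finset.univ) =>
      Finset.sum_le_sum fun ε' (_ : ε' ∈ Finset.univ) => htarget ε ε'
    simp only [lp.norm_eq_ciSup_abs, lp.signedSum_apply]
    rw [Fintype.sum_fin_append_fun, pow_add, div_le_iff₀ (by positivity)]
    calc _ ≤ 2 * ∑ ε, max (⨆ f, signedSum ε fun j => Ψ j f) 0 ^ p := habs
      _ = 2 * (2 ^ M * ∑ ε, max (⨆ f, signedSum ε fun j => Ψ j f) 0 ^ p) / 2 ^ M := by
        field_simp
      _ ≤ 2 * (∑ ε, ∑ ε', ‖signedSum (Fin.append ε ε') u‖ ^ p) / 2 ^ M := by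
        gcongr; exact hcomp.trans h3
      _ = _ := by field_simp
  calc radLq p Ψ ≤ (2 * ((∑ η, ‖signedSum η u‖ ^ p) / 2 ^ (M + M))) ^ (1 / p) :=
        Real.rpow_le_rpow (by positivity) hsum (by positivity)
    _ = 2 ^ (1 / p) * radLq p u := Real.mul_rpow zero_le_two (by positivity)
    _ ≤ 2 * radLq p u := by
      gcongr
      · exact radLq_nonneg u
      exact two_rpow_one_div_le hp

end Contraction

section MonomialBound

variable {i m : ℕ}

/-- The Lipschitz constant of the coordinates of `dualMonomial i m a b` as functions of
`(f (a / ‖a‖), f (b / ‖b‖))`. -/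
noncomputable def monomialScale {G : Type*} [SeminormedAddCommGroup G] (i m : ℕ) (a b : G) : ℝ :=
  (i + m) * (‖a‖ ^ i * ‖b‖ ^ m)

lemma monomialScale_nonneg {G : Type*} [SeminormedAddCommGroup G] (a b : G) :
    0 ≤ monomialScale i m a b := by
  unfold monomialScale; positivity

lemma DualBall.apply_smul_inv_norm (f : DualBall E) (t : ℝ) (x : E) :
    f.1 ((t * ‖x‖⁻¹) • x) = t * (f.1 x / ‖x‖) := by
  simp [div_eq_mul_inv]; ring

lemma norm_smul_inv_norm_le {t : ℝ} (ht : 0 ≤ t) (x : E) : ‖(t * ‖x‖⁻¹) • x‖ ≤ t := by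
  rw [norm_smul, Real.norm_of_nonneg (by positivity), mul_assoc]
  exact mul_le_of_le_one_right ht inv_mul_le_one

lemma dualMonomial_apply_eq (a b : E) (f : DualBall E) :
    dualMonomial i m a b f = ‖a‖ ^ i * ‖b‖ ^ m * ((f.1 a / ‖a‖) ^ i * (f.1 b / ‖b‖) ^ m) := by
  conv_lhs => rw [dualMonomial_apply, f.apply_eq_norm_mul a, f.apply_eq_norm_mul b]
  ring

lemma abs_dualMonomial_apply_le (hi : 0 < i) (a b : E) (f : DualBall E) :
    |dualMonomial i m a b f| ≤ |f.1 ((monomialScale i m a b * ‖a‖⁻¹) • a)|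
      + |f.1 ((monomialScale i m a b * ‖b‖⁻¹) • b)| := by
  have hα := f.abs_apply_div_norm_le_one a
  have hβ := f.abs_apply_div_norm_le_one b
  have hK : (1 : ℝ) ≤ i + m := by norm_cast; omega
  have hαβ : |f.1 a / ‖a‖| ^ i * |f.1 b / ‖b‖| ^ m ≤ |f.1 a / ‖a‖| :=
    (mul_le_of_le_one_right (by positivity) (pow_le_one₀ (abs_nonneg _) hβ)).trans
      (pow_le_of_le_one (abs_nonneg _) hα hi.ne')
  rw [dualMonomial_apply_eq, f.apply_smul_inv_norm, f.apply_smul_inv_norm]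
  simp only [abs_mul, abs_pow, abs_norm, abs_of_nonneg (monomialScale_nonneg (i := i) (m := m) a b)]
  rw [monomialScale]
  nlinarith [mul_le_mul_of_nonneg_left hαβ (by positivity : (0 : ℝ) ≤ ‖a‖ ^ i * ‖b‖ ^ m),
    mul_nonneg (mul_nonneg (sub_nonneg.2 hK) (by positivity : (0 : ℝ) ≤ ‖a‖ ^ i * ‖b‖ ^ m))
      (abs_nonneg (f.1 a / ‖a‖)),
    mul_nonneg (by positivity : (0 : ℝ) ≤ (i + m) * (‖a‖ ^ i * ‖b‖ ^ m))
      (abs_nonneg (f.1 b / ‖b‖))]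

lemma abs_dualMonomial_apply_sub_le (a b : E) (f f' : DualBall E) :
    |dualMonomial i m a b f - dualMonomial i m a b f'|
      ≤ |f.1 ((monomialScale i m a b * ‖a‖⁻¹) • a) - f'.1 ((monomialScale i m a b * ‖a‖⁻¹) • a)|
        + |f.1 ((monomialScale i m a b * ‖b‖⁻¹) • b)
          - f'.1 ((monomialScale i m a b * ‖b‖⁻¹) • b)| := by
  rw [dualMonomial_apply_eq, dualMonomial_apply_eq, f.apply_smul_inv_norm, f'.apply_smul_inv_norm,
    f.apply_smul_inv_norm, f'.apply_smul_inv_norm, ← mul_sub, ← mul_sub, ← mul_sub]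
  simp only [abs_mul, abs_pow, abs_norm, abs_of_nonneg (monomialScale_nonneg (i := i) (m := m) a b)]
  rw [monomialScale]
  have hiK : (i : ℝ) ≤ i + m := le_add_of_nonneg_right (Nat.cast_nonneg m)
  have hmK : (m : ℝ) ≤ i + m := le_add_of_nonneg_left (Nat.cast_nonneg i)
  calc _ ≤ ‖a‖ ^ i * ‖b‖ ^ m * (i * |f.1 a / ‖a‖ - f'.1 a / ‖a‖|
        + m * |f.1 b / ‖b‖ - f'.1 b / ‖b‖|) := by
        gcongr
        exact abs_pow_mul_pow_sub_le (f.abs_apply_div_norm_le_one a)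
          (f.abs_apply_div_norm_le_one b) (f'.abs_apply_div_norm_le_one a)
          (f'.abs_apply_div_norm_le_one b) i m
    _ ≤ ‖a‖ ^ i * ‖b‖ ^ m * ((i + m) * |f.1 a / ‖a‖ - f'.1 a / ‖a‖|
        + (i + m) * |f.1 b / ‖b‖ - f'.1 b / ‖b‖|) := by gcongr
    _ = _ := by ring

theorem radLq_dualMonomial_le {p τ : ℝ} (hp : 1 ≤ p) (hτ0 : 0 ≤ τ)
    (hτ : ∀ (n : ℕ) (x : Fin n → E), radLq p x ≤ τ * (∑ j, ‖x j‖ ^ p) ^ (1 / p))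
    (hi : 0 < i) {M : ℕ} (a b : Fin M → E) :
    radLq p (fun j => dualMonomial i m (a j) (b j))
      ≤ 8 * (i + m) * τ * (∑ j, ‖a j‖ ^ ((i : ℝ) * p) * ‖b j‖ ^ ((m : ℝ) * p)) ^ (1 / p) := by
  set c := fun j => monomialScale i m (a j) (b j)
  have hnorm : ∀ (x : Fin M → E) j, ‖(2 : ℝ) • (c j * ‖x j‖⁻¹) • x j‖ ≤ 2 * c j := fun x j => by
    rw [norm_smul, Real.norm_of_nonneg zero_le_two]
    exact mul_le_mul_of_nonneg_left (norm_smul_inv_norm_le (monomialScale_nonneg _ _) _)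
      zero_le_two
  have hc : ∀ j, 2 * c j = 2 * (i + m) * (‖a j‖ ^ i * ‖b j‖ ^ m) := fun j => by
    simp only [c, monomialScale]; ring
  calc _ ≤ 2 * radLq p (Fin.append (fun j => (2 : ℝ) • (c j * ‖a j‖⁻¹) • a j)
        fun j => (2 : ℝ) • (c j * ‖b j‖⁻¹) • b j) := radLq_le_two_mul_radLq_append hp
        (fun j f => abs_dualMonomial_apply_le hi (a j) (b j) f)
        fun j f f' => abs_dualMonomial_apply_sub_le (a j) (b j) f f'
    _ ≤ 2 * (τ * (2 * (∑ j, (2 * c j) ^ p) ^ (1 / p))) := by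
        gcongr
        exact (hτ _ _).trans (by gcongr; exact rpow_sum_norm_append_le hp (hnorm a) (hnorm b))
    _ = _ := by
        simp only [hc]
        rw [rpow_sum_const_mul_rpow (by positivity) (by linarith) fun j => by positivity]
        simp only [pow_mul_pow_rpow (norm_nonneg _) (norm_nonneg _)]
        ring

end MonomialBound

lemma add_pow_sub_pow_eq_sum_Icc (s t : ℝ) (k : ℕ) :
    (s + t) ^ k - t ^ k = ∑ i ∈ Finset.Icc 1 k, (k.choose i : ℝ) * (s ^ i * t ^ (k - i)) := by
  have hrange : Finset.range (k + 1) = insert 0 (Finset.Icc 1 k) := by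
    ext i; simp only [Finset.mem_range, Finset.mem_insert, Finset.mem_Icc]; omega
  rw [add_pow, hrange, Finset.sum_insert (by simp)]
  simp only [pow_zero, one_mul, Nat.sub_zero, Nat.choose_zero_right, Nat.cast_one, mul_one,
    add_sub_cancel_left]
  exact Finset.sum_congr rfl fun i _ => by ring

section SymmetricTensors

lemma tpair_tprod_sub_tprod {k : ℕ} (a b : E) (f : DualBall E) :
    tpair (fun _ => f.1) ((⨂ₜ[ℝ] _ : Fin k, a) - ⨂ₜ[ℝ] _ : Fin k, b)
      = (∑ i ∈ Finset.Icc 1 k, (k.choose i : ℝ) • dualMonomial i (k - i) (a - b) b) f := by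
  rw [map_sub, tpair_tprod, tpair_tprod, show f.1 a = f.1 (a - b) + f.1 b by simp,
    add_pow_sub_pow_eq_sum_Icc]
  simp only [lp.coeFn_sum, Finset.sum_apply, lp.coeFn_smul, Pi.smul_apply, dualMonomial_apply,
    smul_eq_mul]

theorem radLq_sum_choose_smul_dualMonomial_le {p τ : ℝ} (hp : 1 ≤ p) (hτ0 : 0 ≤ τ)
    (hτ : ∀ (n : ℕ) (x : Fin n → E), radLq p x ≤ τ * (∑ j, ‖x j‖ ^ p) ^ (1 / p))
    {k M : ℕ} (a b : Fin M → E) :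
    radLq p (fun j => ∑ i ∈ Finset.Icc 1 k, (k.choose i : ℝ) • dualMonomial i (k - i) (a j) (b j))
      ≤ 8 * k * τ * ∑ i ∈ Finset.Icc 1 k, (k.choose i : ℝ)
          * (∑ j, ‖a j‖ ^ ((i : ℝ) * p) * ‖b j‖ ^ (((k : ℝ) - i) * p)) ^ (1 / p) := by
  refine (radLq_sum_le hp _ _).trans ?_
  rw [Finset.mul_sum]
  refine Finset.sum_le_sum fun i hi => ?_
  obtain ⟨hi1, hik⟩ := Finset.mem_Icc.1 hi
  rw [radLq_smul (by linarith), abs_of_nonneg (by positivity)]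
  calc _ ≤ (k.choose i : ℝ) * (8 * k * τ
        * (∑ j, ‖a j‖ ^ ((i : ℝ) * p) * ‖b j‖ ^ (((k : ℝ) - i) * p)) ^ (1 / p)) := by
        gcongr
        simpa [Nat.cast_sub hik] using radLq_dualMonomial_le (m := k - i) hp hτ0 hτ hi1 a b
    _ = _ := by ring

theorem integral_symInjNorm_rpow_eq_radLq {Ω : Type*} [MeasurableSpace Ω] {μ : Measure Ω}
    [IsProbabilityMeasure μ] {k M : ℕ} {r : Fin M → Ω → ℝ} (hr_meas : ∀ j, Measurable (r j))
    (hr_val : ∀ j, ∀ᵐ ω ∂μ, r j ω = 1 ∨ r j ω = -1) (hr_half : ∀ j, μ {ω | r j ω = 1} = 1 / 2)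
    (hr_indep : iIndepFun r μ) {U : Fin M → ⨂[ℝ] _ : Fin k, E} {V : Fin M → ℓ^∞(DualBall E, ℝ)}
    (hUV : ∀ j (f : DualBall E), tpair (fun _ => f.1) (U j) = V j f) (q : ℝ) :
    (∫ ω, symInjNorm (∑ j, r j ω • U j) ^ q ∂μ) ^ (1 / q) = radLq q V := by
  have hsigns : ∀ᵐ ω ∂μ, ∑ j, r j ω • U j = signedSum (fun j => decide (r j ω = 1)) U := by
    filter_upwards [ae_all_iff.2 hr_val] with ω hω
    refine Finset.sum_congr rfl fun j _ => ?_
    rcases hω j with h | h <;> simp [h, signed, show (-1 : ℝ) ≠ 1 by norm_num]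
  have hnorm : ∀ ε, symInjNorm (signedSum ε U) = ‖signedSum ε V‖ := fun ε =>
    symInjNorm_eq_norm fun f => by rw [map_signedSum, lp.signedSum_apply]; simp only [hUV]
  rw [integral_congr_ae (hsigns.mono fun ω h => by rw [h, hnorm]),
    integral_comp_rademacher hr_meas hr_half hr_indep fun ε => ‖signedSum ε V‖ ^ q, radLq_def]

end SymmetricTensors

theorem rademacher_tensor_difference_general
    {Ω : Type v} [MeasurableSpace Ω] (μ : Measure Ω) [IsProbabilityMeasure μ]
    (p q τ K₁ K₂ : ℝ) (hp1 : 1 ≤ p) (hq : p ≤ q)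
    (hτ : ∀ (n : ℕ) (x : Fin n → E), radLq p x ≤ τ * (∑ j, ‖x j‖ ^ p) ^ (1/p))
    (hK₁ : ∀ (F : Type u) (_ : SeminormedAddCommGroup F) (n : ℕ) (x : Fin n → F),
      radLq q x ≤ K₁ * radLq p x)
    (hK₂ : ∀ (F : Type u) (_ : SeminormedAddCommGroup F) (n : ℕ) (x : Fin n → F),
      radLq q x ≤ K₂ * radLq 2 x)
    (k M : ℕ)
    (x y : Fin M → E)
    (r : Fin M → Ω → ℝ)
    (hr_meas : ∀ j, Measurable (r j))
    (hr_val : ∀ j, ∀ᵐ ω ∂μ, r j ω = 1 ∨ r j ω = -1)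
    (hr_half : ∀ j, μ {ω | r j ω = 1} = 1/2)
    (hr_indep : iIndepFun r μ) :
    (∫ ω, (symInjNorm (∑ j, r j ω •
        ((⨂ₜ[ℝ] _ : Fin k, x j) - ⨂ₜ[ℝ] _ : Fin k, y j))) ^ q ∂μ) ^ (1/q)
      ≤ 16 * k * Real.sqrt Real.pi * K₁ * τ * K₂
          * ∑ i ∈ Finset.Icc 1 k, (k.choose i : ℝ)
              * (∑ j, ‖x j - y j‖ ^ ((i : ℝ) * p)
                  * ‖y j‖ ^ (((k : ℝ) - (i : ℝ)) * p)) ^ (1/p) := by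
  have hp0 : p ≠ 0 := by linarith
  have hq0 : q ≠ 0 := by linarith
  rw [integral_symInjNorm_rpow_eq_radLq hr_meas hr_val hr_half hr_indep
    fun j => tpair_tprod_sub_tprod (x j) (y j)]
  -- For `E = 0` both sides vanish; otherwise all the constants are at least `1`.
  rcases subsingleton_or_nontrivial E with hE | hE
  · have hxy : ∀ j, x j - y j = 0 := fun j => sub_eq_zero.2 (Subsingleton.elim _ _)
    have hV : (fun j => ∑ i ∈ Finset.Icc 1 k,
        (k.choose i : ℝ) • dualMonomial i (k - i) (x j - y j) (y j)) = fun _ => 0 :=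
      funext fun j => Finset.sum_eq_zero fun i hi => by
        rw [hxy, dualMonomial_zero_left (Nat.one_le_iff_ne_zero.1 (Finset.mem_Icc.1 hi).1),
          smul_zero]
    have hR : ∑ i ∈ Finset.Icc 1 k, (k.choose i : ℝ) * (∑ j, ‖x j - y j‖ ^ ((i : ℝ) * p)
        * ‖y j‖ ^ (((k : ℝ) - (i : ℝ)) * p)) ^ (1 / p) = 0 :=
      Finset.sum_eq_zero fun i hi => by
        have hip : (i : ℝ) * p ≠ 0 :=
          mul_ne_zero (Nat.cast_ne_zero.2 (Nat.one_le_iff_ne_zero.1 (Finset.mem_Icc.1 hi).1)) hp0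
        simp [hxy, Real.zero_rpow hip, Real.zero_rpow (inv_ne_zero hp0)]
    rw [hV, radLq_zero hq0, hR, mul_zero]
  have hunit : 0 < ‖(ULift.up 1 : ULift.{u} ℝ)‖ := by simp [ULift.norm_def]
  have hτ1 := one_le_of_type_const hp0 hτ
  have hK₁1 := one_le_of_radLq_le_mul hunit hp0 hq0 (hK₁ _ _ 1 _)
  have hK₂1 := one_le_of_radLq_le_mul hunit two_ne_zero hq0 (hK₂ _ _ 1 _)
  have hconst : K₁ * (8 * k * τ) ≤ 16 * k * Real.sqrt Real.pi * K₁ * τ * K₂ := by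
    have hπ : 1 ≤ Real.sqrt Real.pi := Real.one_le_sqrt.2 (by linarith [Real.pi_gt_three])
    have : (1 : ℝ) ≤ 2 * Real.sqrt Real.pi * K₂ := by nlinarith
    nlinarith [mul_le_mul_of_nonneg_left this (by positivity : (0 : ℝ) ≤ 8 * k * τ * K₁)]
  calc _ ≤ K₁ * radLq p _ := hK₁ _ _ M _
    _ ≤ K₁ * (8 * k * τ * _) := by
        gcongr; exact radLq_sum_choose_smul_dualMonomial_le hp1 (by linarith) hτ _ _
    _ ≤ _ := by
        rw [← mul_assoc]
        exact mul_le_mul_of_nonneg_right hconst (by positivity)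

/-- **Lemma (Rademacher averages of differences of elementary symmetric
tensors).** If `E` has Rademacher type `p ∈ [1,2]` with constant `τ`,
`K₁ = K_{q,p}` and `K₂ = K_{q,2}` are Kahane–Khintchine constants, `q ∈ [p,∞)`,
then for a Rademacher family `(r_j)` and vectors `x_j, y_j ∈ E`:
`‖Σ_j r_j(⊗^k x_j − ⊗^k y_j)‖_{L_q(Ω̃;⊗^{k,s}_{ε_s}E)}
  ≤ 16 k √π K₁ τ K₂ Σ_{i=1}^k C(k,i) (Σ_j ‖x_j−y_j‖^{ip}‖y_j‖^{(k−i)p})^{1/p}`. -/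
theorem rademacher_tensor_difference
    {Ω : Type v} [MeasurableSpace Ω] (μ : Measure Ω) [IsProbabilityMeasure μ]
    (p q τ K₁ K₂ : ℝ) (hp1 : 1 ≤ p) (hp2 : p ≤ 2) (hq : p ≤ q)
    (hτ : ∀ (n : ℕ) (x : Fin n → E), radLq p x ≤ τ * (∑ j, ‖x j‖ ^ p) ^ (1/p))
    (hK₁ : ∀ (F : Type u) (_ : SeminormedAddCommGroup F) (n : ℕ) (x : Fin n → F),
      radLq q x ≤ K₁ * radLq p x)
    (hK₂ : ∀ (F : Type u) (_ : SeminormedAddCommGroup F) (n : ℕ) (x : Fin n → F),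
      radLq q x ≤ K₂ * radLq 2 x)
    (k M : ℕ) (hk : 1 ≤ k)
    (x y : Fin M → E)
    (r : Fin M → Ω → ℝ)
    (hr_meas : ∀ j, Measurable (r j))
    (hr_val : ∀ j, ∀ᵐ ω ∂μ, r j ω = 1 ∨ r j ω = -1)
    (hr_half : ∀ j, μ {ω | r j ω = 1} = 1/2)
    (hr_indep : iIndepFun r μ) :
    (∫ ω, (symInjNorm (∑ j, r j ω •
        ((⨂ₜ[ℝ] _ : Fin k, x j) - ⨂ₜ[ℝ] _ : Fin k, y j))) ^ q ∂μ) ^ (1/q)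
      ≤ 16 * k * Real.sqrt Real.pi * K₁ * τ * K₂
          * ∑ i ∈ Finset.Icc 1 k, (k.choose i : ℝ)
              * (∑ j, ‖x j - y j‖ ^ ((i : ℝ) * p)
                  * ‖y j‖ ^ (((k : ℝ) - (i : ℝ)) * p)) ^ (1/p) :=
  rademacher_tensor_difference_general μ p q τ K₁ K₂ hp1 hq hτ hK₁ hK₂ k M x y r hr_meas hr_val
    hr_half hr_indep
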